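/- arXiv:math/0210051 — 2 statements merged into one kernel-verified Lean document; each statement's English description precedes it below -/
import Mathlib

section
/- If R and S are infinitesimally-close points of a generic configuration P, then the configurations P∖{R} and P∖{S} are isotopic (in particular, orientedly isomorphic: the bijection sending S to R and fixing all other points preserves the orientation of every triple). -/
open scoped Classical

noncomputable section

/-- Orientation determinant of two vectors in the plane. -/
def det2 (u v : ℝ × ℝ) : ℝ := u.1 * v.2 - u.2 * v.1

/-- The line through `A` and `B` separates the points `P` and `Q`
(they lie in distinct open half-planes determined by the line). -/
def SepLine (A B P Q : ℝ × ℝ) : Prop :=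
  det2 (B - A) (P - A) * det2 (B - A) (Q - A) < 0

/-- A finite planar point set is a generic configuration if no three of its
points are collinear. -/
def Generic (C : Finset (ℝ × ℝ)) : Prop :=
  ∀ a ∈ C, ∀ b ∈ C, ∀ c ∈ C, a ≠ b → a ≠ c → b ≠ c →
    ¬ Collinear ℝ ({a, b, c} : Set (ℝ × ℝ))

/-- `nsep C P Q` is the number of lines spanned by (unordered) pairs of points of
`C \ {P,Q}` that separate `P` from `Q`. -/
def nsep (C : Finset (ℝ × ℝ)) (P Q : ℝ × ℝ) : ℕ :=
  (((C \ {P, Q}).powersetCard 2).filter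
    (fun s => ∃ A ∈ s, ∃ B ∈ s, A ≠ B ∧ SepLine A B P Q)).card

/-- The Orchard relation: `P ∼ Q` iff `n(P,Q) ≡ n - 3 (mod 2)` where `n = |C|`. -/
def Orchard (C : Finset (ℝ × ℝ)) (P Q : ℝ × ℝ) : Prop :=
  (nsep C P Q : ℤ) ≡ (C.card : ℤ) - 3 [ZMOD 2]

/-- A configuration is monochromatic if all its points are Orchard-equivalent. -/
def Mono (C : Finset (ℝ × ℝ)) : Prop :=
  ∀ P ∈ C, ∀ Q ∈ C, P ≠ Q → Orchard C P Q

/-- A configuration is in convex position if each of its points is a vertex of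
the convex hull. -/
def ConvexPos (C : Finset (ℝ × ℝ)) : Prop :=
  ∀ P ∈ C, P ∉ convexHull ℝ ((C : Set (ℝ × ℝ)) \ {P})

/-!
No line spanned by two points of `P ∖ {R, S}` separates `R` from `S`, and by genericity neither
of them lies on such a line. So for any two other points `X`, `Y`, the points `R` and `S` lie
strictly on the same side of the line `XY`: the triples `(X, Y, R)` and `(X, Y, S)` have the same
orientation. As orientation is invariant under cyclic permutations, moving `S` to `R` preserves
the orientation of every triple.
-/

theorem collinear_of_det2_eq_zero {a b c : ℝ × ℝ} (h : det2 (b - a) (c - a) = 0) :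
    Collinear ℝ ({a, b, c} : Set (ℝ × ℝ)) := by
  rcases eq_or_ne a b with rfl | hab
  · simpa using collinear_pair ℝ a c
  have hnorm : (b.1 - a.1) ^ 2 + (b.2 - a.2) ^ 2 ≠ 0 := by
    intro h0
    apply hab
    ext <;> nlinarith [sq_nonneg (b.1 - a.1), sq_nonneg (b.2 - a.2)]
  -- `c - a` equals its orthogonal projection onto the line spanned by `b - a`.
  have hc : c ∈ line[ℝ, a, b] := by
    convert AffineMap.lineMap_mem_affineSpan_pair (k := ℝ)
      (((b.1 - a.1) * (c.1 - a.1) + (b.2 - a.2) * (c.2 - a.2)) /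
        ((b.1 - a.1) ^ 2 + (b.2 - a.2) ^ 2)) a b
    simp only [det2, Prod.fst_sub, Prod.snd_sub] at h
    rw [AffineMap.lineMap_apply_module]
    ext
    · simp only [Prod.fst_add, Prod.smul_fst, smul_eq_mul]
      field_simp
      linear_combination (a.2 - b.2) * h
    · simp only [Prod.snd_add, Prod.smul_snd, smul_eq_mul]
      field_simp
      linear_combination (b.1 - a.1) * h
  have := collinear_insert_of_mem_affineSpan_pair hc
  rwa [Set.insert_comm c a, Set.pair_comm c b] at this

theorem det2_sub_rotate (X Y Z : ℝ × ℝ) : det2 (Y - X) (Z - X) = det2 (Z - Y) (X - Y) := by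
  simp only [det2, Prod.fst_sub, Prod.snd_sub]
  ring

theorem Generic.det2_ne_zero {C : Finset (ℝ × ℝ)} (hC : Generic C) {a b c : ℝ × ℝ}
    (ha : a ∈ C) (hb : b ∈ C) (hc : c ∈ C) (hab : a ≠ b) (hac : a ≠ c) (hbc : b ≠ c) :
    det2 (b - a) (c - a) ≠ 0 :=
  fun h => hC a ha b hb c hc hab hac hbc (collinear_of_det2_eq_zero h)

theorem not_sepLine_of_nsep_eq_zero {C : Finset (ℝ × ℝ)} {R S A B : ℝ × ℝ}
    (hclose : nsep C R S = 0) (hA : A ∈ C \ {R, S}) (hB : B ∈ C \ {R, S}) (hAB : A ≠ B) :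
    ¬ SepLine A B R S := by
  intro hsep
  have hpair : {A, B} ∈ (C \ {R, S}).powersetCard 2 :=
    Finset.mem_powersetCard.mpr ⟨Finset.insert_subset hA (Finset.singleton_subset_iff.mpr hB),
      Finset.card_pair hAB⟩
  refine Finset.card_ne_zero.mpr ⟨{A, B}, Finset.mem_filter.mpr ⟨hpair, ?_⟩⟩ hclose
  exact ⟨A, by simp, B, by simp, hAB, hsep⟩

theorem det2_pos_iff_of_nsep_eq_zero {C : Finset (ℝ × ℝ)} (hC : Generic C) {R S A B : ℝ × ℝ}
    (hR : R ∈ C) (hS : S ∈ C) (hclose : nsep C R S = 0)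
    (hA : A ∈ C \ {R, S}) (hB : B ∈ C \ {R, S}) (hAB : A ≠ B) :
    0 < det2 (B - A) (S - A) ↔ 0 < det2 (B - A) (R - A) := by
  have hnotsep := not_sepLine_of_nsep_eq_zero hclose hA hB hAB
  simp only [Finset.mem_sdiff, Finset.mem_insert, Finset.mem_singleton, not_or] at hA hB
  have hAR := hC.det2_ne_zero hA.1 hB.1 hR hAB hA.2.1 hB.2.1
  have hAS := hC.det2_ne_zero hA.1 hB.1 hS hAB hA.2.2 hB.2.2
  have hsame : 0 < det2 (B - A) (R - A) * det2 (B - A) (S - A) :=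
    (not_lt.mp hnotsep).lt_of_ne (mul_ne_zero hAR hAS).symm
  constructor <;> intro h <;> nlinarith

theorem bijOn_ite_eq {α : Type*} [DecidableEq α] {s : Set α} {R S : α}
    (hR : R ∈ s) (hS : S ∈ s) (hRS : R ≠ S) :
    Set.BijOn (fun X => if X = S then R else X) (s \ {R}) (s \ {S}) := by
  refine ⟨fun X hX => ?_, fun X hX Y hY hXY => ?_, fun Y hY => ?_⟩
  · dsimp only
    split_ifs with hXS
    · exact ⟨hR, hRS⟩
    · exact ⟨hX.1, hXS⟩
  · simp only [Set.mem_sdiff, Set.mem_singleton_iff] at hX hY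
    dsimp only at hXY
    split_ifs at hXY with hXS hYS hYS <;> grind
  · by_cases hYR : Y = R
    · exact ⟨S, ⟨hS, hRS.symm⟩, by simp [hYR]⟩
    · exact ⟨Y, ⟨hY.1, hYR⟩, if_neg hY.2⟩

/-- If `R` and `S` are infinitesimally close in a generic configuration `C`,
then `C \ {R}` and `C \ {S}` are orientedly isomorphic via the bijection which
sends `S` to `R` and fixes all other points: it preserves the orientation of
every triple. -/
theorem infinitesimal_contraction_oriented_iso (C : Finset (ℝ × ℝ)) (hC : Generic C)
    (R S : ℝ × ℝ) (hR : R ∈ C) (hS : S ∈ C) (hRS : R ≠ S)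
    (hclose : nsep C R S = 0) :
    Set.BijOn (fun X => if X = S then R else X)
        ((C : Set (ℝ × ℝ)) \ {R}) ((C : Set (ℝ × ℝ)) \ {S}) ∧
    ∀ X ∈ (C : Set (ℝ × ℝ)) \ {R}, ∀ Y ∈ (C : Set (ℝ × ℝ)) \ {R},
      ∀ Z ∈ (C : Set (ℝ × ℝ)) \ {R}, X ≠ Y → X ≠ Z → Y ≠ Z →
      (0 < det2 (Y - X) (Z - X) ↔
        0 < det2 ((if Y = S then R else Y) - (if X = S then R else X))
               ((if Z = S then R else Z) - (if X = S then R else X))) := by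
  refine ⟨bijOn_ite_eq hR hS hRS, fun X hX Y hY Z hZ hXY hXZ hYZ => ?_⟩
  have side : ∀ {A B}, A ∈ (C : Set (ℝ × ℝ)) \ {R} → B ∈ (C : Set (ℝ × ℝ)) \ {R} → A ≠ S →
      B ≠ S → A ≠ B → (0 < det2 (B - A) (S - A) ↔ 0 < det2 (B - A) (R - A)) :=
    fun hA hB hAS hBS hAB => det2_pos_iff_of_nsep_eq_zero hC hR hS hclose
      (by simp_all) (by simp_all) hAB
  by_cases hXS : X = S
  · subst hXS
    simp only [↓reduceIte, if_neg hXY.symm, if_neg hXZ.symm]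
    rw [det2_sub_rotate, det2_sub_rotate R]
    exact side hY hZ hXY.symm hXZ.symm hYZ
  by_cases hYS : Y = S
  · subst hYS
    simp only [↓reduceIte, if_neg hXS, if_neg hYZ.symm]
    rw [det2_sub_rotate, det2_sub_rotate Y, det2_sub_rotate X R, det2_sub_rotate R]
    exact side hZ hX hYZ.symm hXS hXZ.symm
  by_cases hZS : Z = S
  · subst hZS
    simp only [↓reduceIte, if_neg hXS, if_neg hYS]
    exact side hX hY hXS hYS hXY
  simp only [if_neg hXS, if_neg hYS, if_neg hZS]
end
end

section
/- Let n ≥ 5 be odd and let P consist of the n vertices of a regular n-gon together with its center C. For any vertex V, the number n(V,C) of lines spanned by pairs of the other n−1 points separating V from C satisfies n(V,C) ≡ ⌊n/4⌋ (mod 2). In particular n(V,C) is odd if and only if n ≡ 5 or 7 (mod 8). -/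
open scoped Classical

noncomputable section

/-- The `k`-th vertex of the regular `n`-gon inscribed in the unit circle
centered at the origin. -/
def vtx (n : ℕ) (k : Fin n) : ℝ × ℝ :=
  (Real.cos (2 * Real.pi * k / n), Real.sin (2 * Real.pi * k / n))

/-- The configuration consisting of the vertices of the regular `n`-gon together
with its barycenter (the origin). -/
def ngonWithCenter (n : ℕ) : Finset (ℝ × ℝ) :=
  insert ((0, 0) : ℝ × ℝ) (Finset.image (vtx n) Finset.univ)

/-!
Write the other vertices as `V (k + u)`, `0 < u < n`. For `u < v` the chord `V (k + u) V (k + v)`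
separates `V k` from the centre `C` iff the arc through `V k` between its endpoints is shorter than
a half circle, i.e. iff `n < 2 (v - u)`: up to factors `sin` of angles in `(0, π)`, the product of
the two orientation determinants is `cos (π (v - u) / n)`. For `n = 2m + 1` the pairs with
`v - u > m` are `(i + 1, j + m + 1)` with `i < j < m`, so `n(V, C) = m.choose 2`, and by Lucas'
theorem `m.choose 2 ≡ m / 2 = n / 4 (mod 2)`.
-/

open Finset Real

theorem card_filter_powersetCard_two_image {α β : Type*} [LinearOrder α] [DecidableEq β]
    {s : Finset α} {f : α → β} (hf : Set.InjOn f s) {R : β → β → Prop}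
    (hR : ∀ a b, R a b → R b a) :
    #{t ∈ (s.image f).powersetCard 2 | ∃ a ∈ t, ∃ b ∈ t, a ≠ b ∧ R a b} =
      #{p ∈ s ×ˢ s | p.1 < p.2 ∧ R (f p.1) (f p.2)} := by
  symm
  refine card_bij (fun p _ => {f p.1, f p.2}) ?_ ?_ ?_
  · rintro ⟨a, b⟩ hp
    simp only [mem_filter, mem_product] at hp
    obtain ⟨⟨ha, hb⟩, hab, hRab⟩ := hp
    have hne : f a ≠ f b := fun h => hab.ne (hf ha hb h)
    simp only [mem_filter, mem_powersetCard, card_pair hne, insert_subset_iff,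
      singleton_subset_iff, mem_image_of_mem f ha, mem_image_of_mem f hb]
    exact ⟨by simp, f a, by simp, f b, by simp, hne, hRab⟩
  · rintro ⟨a, b⟩ hp ⟨c, d⟩ hq h
    simp only [mem_filter, mem_product] at hp hq
    obtain ⟨⟨ha, hb⟩, hab, -⟩ := hp
    obtain ⟨⟨hc, hd⟩, hcd, -⟩ := hq
    have h' := congrArg ((↑) : Finset β → Set β) h
    simp only [coe_pair, Set.pair_eq_pair_iff] at h'
    rcases h' with ⟨hac, hbd⟩ | ⟨had, hbc⟩
    · rw [hf ha hc hac, hf hb hd hbd]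
    · have := hf ha hd had
      have := hf hb hc hbc
      subst_vars
      exact absurd (hab.trans hcd) (lt_irrefl _)
  · intro t ht
    simp only [mem_filter, mem_powersetCard] at ht
    obtain ⟨⟨hts, htcard⟩, A, hA, B, hB, hAB, hRAB⟩ := ht
    obtain ⟨x, y, hxy, rfl⟩ := card_eq_two.1 htcard
    obtain ⟨a, ha, rfl⟩ := mem_image.1 (hts (mem_insert_self x {y}))
    obtain ⟨b, hb, rfl⟩ := mem_image.1 (hts (mem_insert_of_mem (mem_singleton_self y)))
    have hRfab : R (f a) (f b) := by
      simp only [mem_insert, mem_singleton] at hA hB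
      rcases hA with rfl | rfl <;> rcases hB with rfl | rfl
      exacts [absurd rfl hAB, hRAB, hR _ _ hRAB, absurd rfl hAB]
    rcases lt_or_gt_of_ne (fun h : a = b => hxy (congrArg f h)) with hab | hba
    · exact ⟨(a, b), by simp [ha, hb, hab, hRfab], rfl⟩
    · exact ⟨(b, a), by simp [ha, hb, hba, hR _ _ hRfab], pair_comm _ _⟩

/-- Offset pairs `(u, v)`: the chord from vertex `k + u` to vertex `k + v` separates vertex `k`
from the centre. -/
def farPairs (n : ℕ) : Finset (ℕ × ℕ) :=
  {p ∈ Ioo 0 n ×ˢ Ioo 0 n | p.1 < p.2 ∧ n < 2 * (p.2 - p.1)}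

lemma card_farPairs (m : ℕ) : #(farPairs (2 * m + 1)) = m.choose 2 := by
  have h := card_product_filter_lt (s := range m)
  rw [card_range] at h
  rw [← h]
  refine card_nbij' (fun p => (p.1 - 1, p.2 - m - 1)) (fun p => (p.1 + 1, p.2 + m + 1))
    ?_ ?_ ?_ ?_
  all_goals
    rintro ⟨a, b⟩
    simp only [farPairs, coe_filter, mem_product, mem_Ioo, mem_range, Set.mem_ofPred_eq,
      Prod.mk.injEq]
    omega

lemma choose_two_modEq_div_two (m : ℕ) : m.choose 2 ≡ m / 2 [MOD 2] := by
  simpa using Choose.choose_modEq_choose_mod_mul_choose_div_nat (p := 2) (n := m) (k := 2)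

def circlePt (θ : ℝ) : ℝ × ℝ := (cos θ, sin θ)

lemma det2_circlePt_sub (α β δ : ℝ) :
    det2 (circlePt β - circlePt α) (circlePt δ - circlePt α) =
      sin (β - α) + sin (δ - β) + sin (α - δ) := by
  simp only [det2, circlePt, Prod.mk_sub_mk, sin_sub]
  ring

lemma det2_circlePt_sub_origin (α β : ℝ) :
    det2 (circlePt β - circlePt α) ((0, 0) - circlePt α) = sin (β - α) := by
  simp only [det2, circlePt, Prod.mk_sub_mk, sin_sub]
  ring

lemma sepLine_comm (A B P Q : ℝ × ℝ) : SepLine A B P Q ↔ SepLine B A P Q := by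
  have h : det2 (A - B) (P - B) * det2 (A - B) (Q - B) =
      det2 (B - A) (P - A) * det2 (B - A) (Q - A) := by
    simp only [det2, Prod.fst_sub, Prod.snd_sub]
    ring
  rw [SepLine, SepLine, h]

lemma sepLine_circlePt_iff {γ x y : ℝ} (hx : 0 < x) (hxy : x < y) (hy : y < π) :
    SepLine (circlePt (γ + 2 * x)) (circlePt (γ + 2 * y)) (circlePt γ) (0, 0) ↔
      π / 2 < y - x := by
  have hsin : 0 < sin x * sin y * sin (y - x) ^ 2 := by
    have := sin_pos_of_pos_of_lt_pi (sub_pos.2 hxy) (by linarith)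
    have := sin_pos_of_pos_of_lt_pi hx (by linarith)
    have := sin_pos_of_pos_of_lt_pi (by linarith) hy
    positivity
  have hsum : sin (2 * (y - x)) + sin (-(2 * y)) + sin (2 * x) =
      4 * sin x * sin y * sin (y - x) := by
    rw [sin_neg, sin_two_mul, sin_two_mul, sin_two_mul, sin_sub, cos_sub]
    linear_combination 2 * sin y * cos y * sin_sq_add_cos_sq x -
      2 * sin x * cos x * sin_sq_add_cos_sq y
  have hdet :
      det2 (circlePt (γ + 2 * y) - circlePt (γ + 2 * x)) (circlePt γ - circlePt (γ + 2 * x)) *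
      det2 (circlePt (γ + 2 * y) - circlePt (γ + 2 * x)) ((0, 0) - circlePt (γ + 2 * x)) =
      8 * (sin x * sin y * sin (y - x) ^ 2) * cos (y - x) := by
    rw [det2_circlePt_sub, det2_circlePt_sub_origin,
      show γ + 2 * y - (γ + 2 * x) = 2 * (y - x) by ring,
      show γ - (γ + 2 * y) = -(2 * y) by ring, show γ + 2 * x - γ = 2 * x by ring, hsum,
      sin_two_mul]
    ring
  have hpos : 0 < 8 * (sin x * sin y * sin (y - x) ^ 2) := by positivity
  rw [SepLine, hdet]
  trans cos (y - x) < 0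
  · exact ⟨fun h => neg_of_mul_neg_right h hpos.le, mul_neg_of_pos_of_neg hpos⟩
  constructor
  · intro hcos
    by_contra! hle
    exact (cos_nonneg_of_mem_Icc ⟨by linarith, hle⟩).not_gt hcos
  · intro hlt
    exact cos_neg_of_pi_div_two_lt_of_lt hlt (by linarith)

lemma vtx_eq_circlePt (n : ℕ) (k : Fin n) : vtx n k = circlePt (2 * π * k / n) := rfl

lemma vtx_ne_origin (n : ℕ) (k : Fin n) : vtx n k ≠ (0, 0) := by
  intro h
  have h1 := cos_sq_add_sin_sq (2 * π * k / n)
  simp only [vtx, Prod.ext_iff] at h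
  rw [h.1, h.2] at h1
  norm_num at h1

lemma vtx_injective (n : ℕ) : Function.Injective (vtx n) := by
  intro i j h
  have hn : (0 : ℝ) < n := by exact_mod_cast i.pos
  have hi : (i : ℝ) < n := by exact_mod_cast i.isLt
  have hj : (j : ℝ) < n := by exact_mod_cast j.isLt
  have hi₀ : (0 : ℝ) ≤ i := i.val.cast_nonneg
  have hj₀ : (0 : ℝ) ≤ j := j.val.cast_nonneg
  set t : ℝ := (i - j : ℝ) / n with ht
  have hcos : cos (2 * π * t) = 1 := by
    simp only [vtx, Prod.ext_iff] at h
    rw [show 2 * π * t = 2 * π * i / n - 2 * π * j / n by rw [ht]; ring, cos_sub, h.1, h.2]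
    linear_combination cos_sq_add_sin_sq (2 * π * j / n)
  have ht₁ : -1 < t := by rw [ht, lt_div_iff₀ hn]; linarith
  have ht₂ : t < 1 := by rw [ht, div_lt_iff₀ hn]; linarith
  have h0 := (cos_eq_one_iff_of_lt_of_lt (by nlinarith [pi_pos]) (by nlinarith [pi_pos])).1 hcos
  simp only [ht, mul_eq_zero, div_eq_zero_iff, sub_eq_zero, two_ne_zero, pi_ne_zero, hn.ne',
    false_or, or_false] at h0
  exact Fin.ext (by exact_mod_cast h0)

section Offsets

open Fin.NatCast

variable {n : ℕ} [NeZero n]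

lemma vtx_add_natCast (k : Fin n) (u : ℕ) :
    vtx n (k + (u : Fin n)) = circlePt (2 * π * k / n + 2 * (π * u / n)) := by
  have hn : (n : ℝ) ≠ 0 := Nat.cast_ne_zero.2 (NeZero.ne n)
  have hval : (((k + u) % n : ℕ) : ℝ) + n * ((k + u) / n : ℕ) = k + u := by
    exact_mod_cast Nat.mod_add_div (k + u) n
  rw [vtx_eq_circlePt, Fin.val_add, Fin.val_natCast, Nat.add_mod_mod]
  have hangle : 2 * π * k / n + 2 * (π * u / n) =
      2 * π * ((k + u) % n : ℕ) / n + ((k + u) / n : ℕ) * (2 * π) := by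
    field_simp
    linear_combination -hval
  simp only [circlePt, hangle, cos_add_nat_mul_two_pi, sin_add_nat_mul_two_pi]

lemma sepLine_vtx_add_natCast_iff (k : Fin n) {u v : ℕ} (hu : 0 < u) (huv : u < v) (hv : v < n) :
    SepLine (vtx n (k + (u : Fin n))) (vtx n (k + (v : Fin n))) (vtx n k) (0, 0) ↔
      n < 2 * (v - u) := by
  have hn : (0 : ℝ) < n := by exact_mod_cast Nat.pos_of_ne_zero (NeZero.ne n)
  have hπ := pi_pos
  have hu' : (0 : ℝ) < u := by exact_mod_cast hu
  have huv' : (u : ℝ) < v := by exact_mod_cast huv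
  have hv' : (v : ℝ) < n := by exact_mod_cast hv
  rw [vtx_add_natCast, vtx_add_natCast, vtx_eq_circlePt,
    sepLine_circlePt_iff (by positivity) (by gcongr) (by rw [div_lt_iff₀ hn]; nlinarith),
    ← sub_div, ← mul_sub, lt_div_iff₀ hn, div_mul_eq_mul_div, div_lt_iff₀ two_pos,
    mul_assoc, mul_lt_mul_iff_right₀ hπ, ← Nat.cast_sub huv.le, mul_comm]
  exact_mod_cast Iff.rfl

lemma injOn_vtx_add_natCast (k : Fin n) :
    Set.InjOn (fun u : ℕ => vtx n (k + (u : Fin n))) (Ioo 0 n : Finset ℕ) := by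
  intro u hu v hv h
  have huv := congrArg Fin.val (add_left_cancel (vtx_injective n h))
  simp only [coe_Ioo, Set.mem_Ioo] at hu hv
  rwa [Fin.val_natCast, Fin.val_natCast, Nat.mod_eq_of_lt hu.2, Nat.mod_eq_of_lt hv.2] at huv

lemma ngonWithCenter_sdiff_vtx_origin (k : Fin n) :
    ngonWithCenter n \ {vtx n k, (0, 0)} =
      (Ioo 0 n).image (fun u : ℕ => vtx n (k + (u : Fin n))) := by
  ext P
  simp only [ngonWithCenter, mem_sdiff, mem_insert, mem_singleton, mem_image, mem_univ, true_and,
    mem_Ioo]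
  constructor
  · rintro ⟨(rfl | ⟨j, rfl⟩), hP⟩
    · simp at hP
    · have hj : j - k ≠ 0 := sub_ne_zero.2 fun h => hP (Or.inl (by rw [h]))
      refine ⟨(j - k : Fin n), ⟨Nat.pos_of_ne_zero (Fin.val_ne_iff.2 hj), (j - k).isLt⟩, ?_⟩
      rw [Fin.cast_val_eq_self, add_sub_cancel]
  · rintro ⟨u, ⟨hu, hun⟩, rfl⟩
    refine ⟨Or.inr ⟨_, rfl⟩, ?_⟩
    rintro (h | h)
    · have : ((u : ℕ) : Fin n) = 0 := by simpa using vtx_injective n h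
      rw [Fin.natCast_eq_zero] at this
      exact absurd (Nat.le_of_dvd hu this) (by omega)
    · exact vtx_ne_origin n _ h

lemma nsep_vtx_origin (k : Fin n) :
    nsep (ngonWithCenter n) (vtx n k) (0, 0) = #(farPairs n) := by
  rw [nsep, ngonWithCenter_sdiff_vtx_origin,
    card_filter_powersetCard_two_image (R := fun A B => SepLine A B (vtx n k) (0, 0))
      (injOn_vtx_add_natCast k) (fun A B => (sepLine_comm A B _ _).1)]
  congr 1
  ext ⟨u, v⟩
  simp only [farPairs, mem_filter, mem_product, mem_Ioo]
  refine and_congr_right fun ⟨⟨hu, _⟩, _, hv⟩ => and_congr_right fun huv => ?_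
  exact sepLine_vtx_add_natCast_iff k hu huv hv

end Offsets

theorem vertex_center_separating_lines_general (n : ℕ) (hodd : Odd n)
    (k : Fin n) :
    (nsep (ngonWithCenter n) (vtx n k) (0, 0) : ℤ) ≡ ((n / 4 : ℕ) : ℤ) [ZMOD 2] ∧
    (Odd (nsep (ngonWithCenter n) (vtx n k) (0, 0)) ↔ n % 8 = 5 ∨ n % 8 = 7) := by
  have : NeZero n := NeZero.of_pos k.pos
  obtain ⟨m, rfl⟩ := hodd
  have hmod : nsep (ngonWithCenter (2 * m + 1)) (vtx _ k) (0, 0) % 2 = m / 2 % 2 := by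
    rw [nsep_vtx_origin, card_farPairs]
    exact choose_two_modEq_div_two m
  rw [Int.ModEq, Nat.odd_iff]
  omega

/-- For an odd `n ≥ 5`, and the configuration of the `n` vertices of a regular
`n`-gon together with its center, the number of separating lines between any
vertex and the center is congruent to `⌊n/4⌋ (mod 2)`; in particular it is odd
iff `n ≡ 5, 7 (mod 8)`. -/
theorem vertex_center_separating_lines (n : ℕ) [NeZero n] (hn : 5 ≤ n) (hodd : Odd n)
    (k : Fin n) :
    (nsep (ngonWithCenter n) (vtx n k) (0, 0) : ℤ) ≡ ((n / 4 : ℕ) : ℤ) [ZMOD 2] ∧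
    (Odd (nsep (ngonWithCenter n) (vtx n k) (0, 0)) ↔ n % 8 = 5 ∨ n % 8 = 7) :=
  vertex_center_separating_lines_general n hodd k
end
end
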